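/- Let R be an n×n real symmetric positive definite matrix, M : ℕ → ℝ a nonnegative function, g : ℕ → ℝ and x : ℕ → ℝⁿ functions, such that the series ∑_{i=0}^∞ M(i), ∑_{i=0}^∞ M(i)g(i), ∑_{i=0}^∞ M(i)g(i)², ∑_{i=0}^∞ M(i)x(i), ∑_{i=0}^∞ M(i)g(i)x(i) and ∑_{i=0}^∞ M(i)x(i)ᵀRx(i) are (absolutely) convergent, ∑_{i=0}^∞ M(i)g(i) = 0, ∑_{i=0}^∞ M(i)g(i)² > 0, and M₀ := ∑_{i=0}^∞ M(i) > 0. Then ∑_{i=0}^∞ M(i) x(i)ᵀ R x(i) ≥ M₀⁻¹ (∑_{i=0}^∞ M(i)x(i))ᵀ R (∑_{i=0}^∞ M(i)x(i)) + (∑_{i=0}^∞ M(i)g(i)²)⁻¹ Πᵀ R Π, where Π := ∑_{i=0}^∞ M(i)g(i)x(i). -/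

import Mathlib

/-
The sum `∑ M i (x i - a - g i b)ᵀ R (x i - a - g i b)` is nonnegative for all vectors `a`, `b`.
Expanding it, the mixed term `2 (∑ M i g i) aᵀ R b` vanishes, and at the least-squares choice
`a = M₀⁻¹ ∑ M i x i`, `b = (∑ M i g i²)⁻¹ Π` what remains is exactly the difference of the two
sides of the inequality.
-/

open Matrix

section

variable {ι β α : Type*} [Fintype ι]

theorem HasSum.dotProduct_right [NonUnitalNonAssocSemiring α] [TopologicalSpace α]
    [IsTopologicalSemiring α] {v : β → ι → α} {V : ι → α} (h : HasSum v V) (w : ι → α) :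
    HasSum (fun i => v i ⬝ᵥ w) (V ⬝ᵥ w) :=
  hasSum_sum fun j _ => (Pi.hasSum.mp h j).mul_right (w j)

theorem Matrix.IsSymm.dotProduct_mulVec_comm [CommSemiring α] {R : Matrix ι ι α}
    (hR : R.IsSymm) (u v : ι → α) : u ⬝ᵥ R *ᵥ v = v ⬝ᵥ R *ᵥ u := by
  rw [dotProduct_mulVec, dotProduct_comm, ← vecMul_transpose, hR.eq]

theorem Matrix.IsSymm.dotProduct_mulVec_sub_sub_smul [CommRing α]
    {R : Matrix ι ι α} (hR : R.IsSymm) (x a b : ι → α) (t : α) :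
    (x - a - t • b) ⬝ᵥ R *ᵥ (x - a - t • b) =
      x ⬝ᵥ R *ᵥ x - 2 * (x ⬝ᵥ R *ᵥ a) - 2 * t * (x ⬝ᵥ R *ᵥ b) + a ⬝ᵥ R *ᵥ a
        + 2 * t * (a ⬝ᵥ R *ᵥ b) + t ^ 2 * (b ⬝ᵥ R *ᵥ b) := by
  simp only [mulVec_sub, mulVec_smul, sub_dotProduct, dotProduct_sub, smul_dotProduct,
    dotProduct_smul, smul_eq_mul, hR.dotProduct_mulVec_comm a x, hR.dotProduct_mulVec_comm b x,
    hR.dotProduct_mulVec_comm b a]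
  ring

theorem Matrix.IsSymm.hasSum_mul_dotProduct_mulVec_sub_sub_smul [CommRing α]
    [TopologicalSpace α] [IsTopologicalRing α] {R : Matrix ι ι α} (hR : R.IsSymm)
    {M g : β → α} {x : β → ι → α} {A C Q : α} {X P : ι → α}
    (hA : HasSum M A) (hMg : HasSum (fun i => M i * g i) 0)
    (hC : HasSum (fun i => M i * g i ^ 2) C) (hX : HasSum (fun i => M i • x i) X)
    (hP : HasSum (fun i => (M i * g i) • x i) P)
    (hQ : HasSum (fun i => M i * (x i ⬝ᵥ R *ᵥ x i)) Q) (a b : ι → α) :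
    HasSum (fun i => M i * ((x i - a - g i • b) ⬝ᵥ R *ᵥ (x i - a - g i • b)))
      (Q - 2 * (X ⬝ᵥ R *ᵥ a) - 2 * (P ⬝ᵥ R *ᵥ b) + A * (a ⬝ᵥ R *ᵥ a)
        + C * (b ⬝ᵥ R *ᵥ b)) := by
  have hXa := hX.dotProduct_right (R *ᵥ a)
  have hPb := hP.dotProduct_right (R *ᵥ b)
  simp only [smul_dotProduct, smul_eq_mul] at hXa hPb
  have h := (((((hQ.sub (hXa.mul_left 2)).sub (hPb.mul_left 2)).add
    (hA.mul_right (a ⬝ᵥ R *ᵥ a))).add (hMg.mul_right (2 * (a ⬝ᵥ R *ᵥ b)))).add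
    (hC.mul_right (b ⬝ᵥ R *ᵥ b)))
  rw [zero_mul, add_zero] at h
  refine h.congr_fun fun i => ?_
  rw [hR.dotProduct_mulVec_sub_sub_smul]
  ring

theorem Matrix.IsSymm.hasSum_jensen_gap [Field α] [TopologicalSpace α] [IsTopologicalRing α]
    {R : Matrix ι ι α} (hR : R.IsSymm) {M g : β → α} {x : β → ι → α} {A C Q : α}
    {X P : ι → α} (hA : HasSum M A) (hMg : HasSum (fun i => M i * g i) 0)
    (hC : HasSum (fun i => M i * g i ^ 2) C) (hX : HasSum (fun i => M i • x i) X)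
    (hP : HasSum (fun i => (M i * g i) • x i) P)
    (hQ : HasSum (fun i => M i * (x i ⬝ᵥ R *ᵥ x i)) Q) :
    HasSum (fun i => M i * ((x i - A⁻¹ • X - g i • C⁻¹ • P) ⬝ᵥ
        R *ᵥ (x i - A⁻¹ • X - g i • C⁻¹ • P)))
      (Q - A⁻¹ * (X ⬝ᵥ R *ᵥ X) - C⁻¹ * (P ⬝ᵥ R *ᵥ P)) := by
  -- with `0⁻¹ = 0` this also holds for `c = 0`
  have hinv (c q : α) : c * (c⁻¹ * (c⁻¹ * q)) = c⁻¹ * q := by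
    rcases eq_or_ne c 0 with rfl | hc
    · simp
    · field_simp
  convert hR.hasSum_mul_dotProduct_mulVec_sub_sub_smul hA hMg hC hX hP hQ (A⁻¹ • X) (C⁻¹ • P)
    using 1
  simp only [mulVec_smul, dotProduct_smul, smul_dotProduct, smul_eq_mul, hinv]
  ring

end

theorem extended_jensen_summation_infinite_general {n : ℕ}
    (R : Matrix (Fin n) (Fin n) ℝ) (hRpd : R.PosDef)
    (M : ℕ → ℝ) (g : ℕ → ℝ) (x : ℕ → (Fin n → ℝ))
    (hMnonneg : ∀ i, 0 ≤ M i)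
    (hM : Summable M)
    (hMg : Summable (fun i => M i * g i))
    (hMg2 : Summable (fun i => M i * (g i) ^ 2))
    (hMx : Summable (fun i => M i • x i))
    (hMgx : Summable (fun i => (M i * g i) • x i))
    (hMxRx : Summable (fun i => M i * (x i ⬝ᵥ R.mulVec (x i))))
    (hMg0 : ∑' i, M i * g i = 0) :
    ∑' i, M i * (x i ⬝ᵥ R.mulVec (x i)) ≥
      (∑' i, M i)⁻¹ *
        ((∑' i, M i • x i) ⬝ᵥ R.mulVec (∑' i, M i • x i)) +
      (∑' i, M i * (g i) ^ 2)⁻¹ *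
        ((∑' i, (M i * g i) • x i) ⬝ᵥ R.mulVec (∑' i, (M i * g i) • x i)) := by
  have hR := hRpd.posSemidef
  have hgap := (isHermitian_iff_isSymm.mp hR.isHermitian).hasSum_jensen_gap
    hM.hasSum (hMg0 ▸ hMg.hasSum) hMg2.hasSum hMx.hasSum hMgx.hasSum hMxRx.hasSum
  have hgap_nonneg := hgap.nonneg fun i =>
    mul_nonneg (hMnonneg i) (by simpa only [star_trivial] using hR.dotProduct_mulVec_nonneg _)
  linarith

/-- Theorem 3: extended Jensen summation inequality with infinite sequences. -/
theorem extended_jensen_summation_infinite {n : ℕ}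
    (R : Matrix (Fin n) (Fin n) ℝ) (hRsym : R.IsSymm) (hRpd : R.PosDef)
    (M : ℕ → ℝ) (g : ℕ → ℝ) (x : ℕ → (Fin n → ℝ))
    (hMnonneg : ∀ i, 0 ≤ M i)
    (hM : Summable M)
    (hMg : Summable (fun i => M i * g i))
    (hMg2 : Summable (fun i => M i * (g i) ^ 2))
    (hMx : Summable (fun i => M i • x i))
    (hMgx : Summable (fun i => (M i * g i) • x i))
    (hMxRx : Summable (fun i => M i * (x i ⬝ᵥ R.mulVec (x i))))
    (hMg0 : ∑' i, M i * g i = 0)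
    (hMg2pos : 0 < ∑' i, M i * (g i) ^ 2)
    (hM0pos : 0 < ∑' i, M i) :
    ∑' i, M i * (x i ⬝ᵥ R.mulVec (x i)) ≥
      (∑' i, M i)⁻¹ *
        ((∑' i, M i • x i) ⬝ᵥ R.mulVec (∑' i, M i • x i)) +
      (∑' i, M i * (g i) ^ 2)⁻¹ *
        ((∑' i, (M i * g i) • x i) ⬝ᵥ R.mulVec (∑' i, (M i * g i) • x i)) :=
  extended_jensen_summation_infinite_general R hRpd M g x hMnonneg hM hMg hMg2 hMx hMgx hMxRx hMg0
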